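/- arXiv:1705.10502 — 2 statements merged into one kernel-verified Lean document; each statement's English description precedes it below -/
import Mathlib

section
/- Let C(U), C(X), C(Z) be pretriangulated categories related by gluing and equipped with weight structures compatible with the gluing. Let M_U be an object of the heart C(U)_{w=0}, and let C_{≤0} → i^* j_* M_U → C_{≥1} → C_{≤0}[1] be a distinguished triangle with C_{≤0} ∈ C(Z)_{w≤0} and C_{≥1} ∈ C(Z)_{w≥1}. Then there exists an object M of the heart C(X)_{w=0} together with isomorphisms j^* M ≅ M_U, i^* M ≅ C_{≤0}, and i^! M ≅ C_{≥1}[−1]. (Construction 1.) -/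
set_option linter.unusedVariables false

open CategoryTheory Limits Pretriangulated

universe w₁ w₂ w₃ w₄ v₁ v₂ v₃ v₄ u₁ u₂ u₃ u₄

/-- A weight structure on a pretriangulated category `C`: a pair of classes of objects
`(C_{w≤0}, C_{w≥0})`, each containing the zero objects and closed under isomorphisms and
retracts (direct summands), such that `C_{w≤0}[-1] ⊆ C_{w≤0}`, `C_{w≥0}[1] ⊆ C_{w≥0}`,
`Hom(A, B[1]) = 0` for `A ∈ C_{w≤0}`, `B ∈ C_{w≥0}`, and every object admits a weight
filtration. -/
structure WeightStructure (C : Type*) [Category C] [HasZeroObject C] [Preadditive C]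
    [HasShift C ℤ] [∀ n : ℤ, (shiftFunctor C n).Additive] [Pretriangulated C] where
  le : C → Prop
  ge : C → Prop
  le_zero : ∀ X : C, IsZero X → le X
  ge_zero : ∀ X : C, IsZero X → ge X
  le_iso : ∀ {X Y : C}, (X ≅ Y) → le X → le Y
  ge_iso : ∀ {X Y : C}, (X ≅ Y) → ge X → ge Y
  le_retract : ∀ {X Y : C} (s : X ⟶ Y) (r : Y ⟶ X), s ≫ r = 𝟙 X → le Y → le X
  ge_retract : ∀ {X Y : C} (s : X ⟶ Y) (r : Y ⟶ X), s ≫ r = 𝟙 X → ge Y → ge X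
  le_shift : ∀ X : C, le X → le (X⟦(-1 : ℤ)⟧)
  ge_shift : ∀ X : C, ge X → ge (X⟦(1 : ℤ)⟧)
  orth : ∀ {A B : C} (f : A ⟶ B⟦(1 : ℤ)⟧), le A → ge B → f = 0
  exists_weight_filtration : ∀ M : C, ∃ (A B : C) (f : A ⟶ M) (g : M ⟶ B)
    (h : B ⟶ A⟦(1 : ℤ)⟧), (Triangle.mk f g h ∈ distTriang C) ∧ le A ∧ ge (B⟦(-1 : ℤ)⟧)

namespace WeightStructure

variable {C : Type*} [Category C] [HasZeroObject C] [Preadditive C]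
    [HasShift C ℤ] [∀ n : ℤ, (shiftFunctor C n).Additive] [Pretriangulated C]

/-- `X ∈ C_{w ≤ n}`, i.e. `X[-n] ∈ C_{w ≤ 0}`. -/
def leW (w : WeightStructure C) (n : ℤ) (X : C) : Prop := w.le (X⟦(-n : ℤ)⟧)

/-- `X ∈ C_{w ≥ n}`, i.e. `X[-n] ∈ C_{w ≥ 0}`. -/
def geW (w : WeightStructure C) (n : ℤ) (X : C) : Prop := w.ge (X⟦(-n : ℤ)⟧)

/-- The heart `C_{w = 0}`. -/
def heart (w : WeightStructure C) (X : C) : Prop := w.le X ∧ w.ge X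

/-- `M` is without weights `m, …, n`: there is a distinguished triangle
`M_{≤ m-1} → M → M_{≥ n+1} → M_{≤ m-1}[1]` with `M_{≤ m-1} ∈ C_{w ≤ m-1}` and
`M_{≥ n+1} ∈ C_{w ≥ n+1}` (a weight filtration avoiding weights `m, …, n`). -/
def WithoutWeights (w : WeightStructure C) (m n : ℤ) (M : C) : Prop :=
  ∃ (A B : C) (f : A ⟶ M) (g : M ⟶ B) (h : B ⟶ A⟦(1 : ℤ)⟧),
    (Triangle.mk f g h ∈ distTriang C) ∧ w.leW (m - 1) A ∧ w.geW (n + 1) B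

end WeightStructure

/-- A weight-exact (exact) functor between pretriangulated categories equipped with
weight structures: `F(C_{w≤0}) ⊆ D_{w≤0}` and `F(C_{w≥0}) ⊆ D_{w≥0}`. -/
def WeightExact {C : Type*} [Category C] [HasZeroObject C] [Preadditive C]
    [HasShift C ℤ] [∀ n : ℤ, (shiftFunctor C n).Additive] [Pretriangulated C]
    {D : Type*} [Category D] [HasZeroObject D] [Preadditive D]
    [HasShift D ℤ] [∀ n : ℤ, (shiftFunctor D n).Additive] [Pretriangulated D]
    (wC : WeightStructure C) (wD : WeightStructure D) (F : C ⥤ D) : Prop :=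
  (∀ X : C, wC.le X → wD.le (F.obj X)) ∧ (∀ X : C, wC.ge X → wD.ge (F.obj X))

variable {CU : Type*} [Category CU] [HasZeroObject CU] [Preadditive CU]
  [HasShift CU ℤ] [∀ n : ℤ, (shiftFunctor CU n).Additive] [Pretriangulated CU]
variable {CX : Type*} [Category CX] [HasZeroObject CX] [Preadditive CX]
  [HasShift CX ℤ] [∀ n : ℤ, (shiftFunctor CX n).Additive] [Pretriangulated CX]
variable {CZ : Type*} [Category CZ] [HasZeroObject CZ] [Preadditive CZ]
  [HasShift CZ ℤ] [∀ n : ℤ, (shiftFunctor CZ n).Additive] [Pretriangulated CZ]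

/- The six gluing functors: `jl = j_!`, `js = j^*`, `jr = j_*`,
   `il = i^*`, `im = i_*`, `ir = i^!`; all of them are exact. -/
variable (jl : CU ⥤ CX) (js : CX ⥤ CU) (jr : CU ⥤ CX)
  (il : CX ⥤ CZ) (im : CZ ⥤ CX) (ir : CX ⥤ CZ)
  [jl.CommShift ℤ] [jl.IsTriangulated] [js.CommShift ℤ] [js.IsTriangulated]
  [jr.CommShift ℤ] [jr.IsTriangulated] [il.CommShift ℤ] [il.IsTriangulated]
  [im.CommShift ℤ] [im.IsTriangulated] [ir.CommShift ℤ] [ir.IsTriangulated]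
  [im.Full] [im.Faithful]
variable (adj₁ : jl ⊣ js) (adj₂ : js ⊣ jr) (adj₃ : il ⊣ im) (adj₄ : im ⊣ ir)

/-- The axioms of a gluing ("recollement") situation relating `C(U)`, `C(X)` and `C(Z)`:
`j^* ∘ i_* = 0`, the unit `id → j^* j_!` and the counit `j^* j_* → id` are isomorphisms,
and the two localization triangles `j_! j^* M → M → i_* i^* M → (j_! j^* M)[1]` and
`i_* i^! M → M → j_* j^* M → (i_* i^! M)[1]` are distinguished.
(Full faithfulness of `i_*` is part of the ambient variable context.) -/
structure IsGluing : Prop where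
  js_im_zero : ∀ Z : CZ, IsZero (js.obj (im.obj Z))
  unit_iso : IsIso adj₁.unit
  counit_iso : IsIso adj₂.counit
  tri₁ : ∀ M : CX, ∃ δ : im.obj (il.obj M) ⟶ (jl.obj (js.obj M))⟦(1 : ℤ)⟧,
    Triangle.mk (adj₁.counit.app M) (adj₃.unit.app M) δ ∈ distTriang CX
  tri₂ : ∀ M : CX, ∃ δ : jr.obj (js.obj M) ⟶ (im.obj (ir.obj M))⟦(1 : ℤ)⟧,
    Triangle.mk (adj₄.counit.app M) (adj₂.unit.app M) δ ∈ distTriang CX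

variable (wU : WeightStructure CU) (wX : WeightStructure CX) (wZ : WeightStructure CZ)

/-- Compatibility of the weight structures on `C(U)`, `C(X)`, `C(Z)` with the gluing:
the left adjoints `j_!`, `j^*`, `i^*`, `i_*` respect `(w ≤ 0)`, and the right adjoints
`j^*`, `j_*`, `i_*`, `i^!` respect `(w ≥ 0)`. -/
structure GluedWeights : Prop where
  jl_le : ∀ X : CU, wU.le X → wX.le (jl.obj X)
  js_le : ∀ X : CX, wX.le X → wU.le (js.obj X)
  js_ge : ∀ X : CX, wX.ge X → wU.ge (js.obj X)
  il_le : ∀ X : CX, wX.le X → wZ.le (il.obj X)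
  im_le : ∀ X : CZ, wZ.le X → wX.le (im.obj X)
  im_ge : ∀ X : CZ, wZ.ge X → wX.ge (im.obj X)
  jr_ge : ∀ X : CU, wU.ge X → wX.ge (jr.obj X)
  ir_ge : ∀ X : CX, wX.ge X → wZ.ge (ir.obj X)

/-!
Let `φ : j_* M_U → i_* C_{≥1}` correspond under `i^* ⊣ i_*` to `i^* j_* M_U → C_{≥1}`, and
let `M → j_* M_U → i_* C_{≥1} → M[1]` be a distinguished triangle on it. As `j^*` kills `i_*`,
`j^* M ≅ j^* j_* M_U ≅ M_U`; by adjunction `i^!` then kills `j_*`, so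
`i^! M ≅ (i^! i_* C_{≥1})[-1] ≅ C_{≥1}[-1]`; and `i^*` turns `φ` back into the given map, so
`i^* M` is its fibre `C_{≤0}`. Finally `M` is an extension of `j_* M_U` by `(i_* C_{≥1})[-1]`,
both of weight `≥ 0`, and of `i_* i^* M` by `j_! j^* M`, both of weight `≤ 0`.
-/

namespace WeightStructure

variable {C : Type*} [Category C] [HasZeroObject C] [Preadditive C]
  [HasShift C ℤ] [∀ n : ℤ, (shiftFunctor C n).Additive] [Pretriangulated C]
  (w : WeightStructure C)

lemma eq_zero_of_le_of_ge_shift {A B : C} (f : A ⟶ B) (hA : w.le A)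
    (hB : w.ge (B⟦(-1 : ℤ)⟧)) : f = 0 := by
  have h : f ≫ (shiftNegShift B (1 : ℤ)).inv = 0 := w.orth _ hA hB
  rwa [Preadditive.IsIso.comp_right_eq_zero] at h

lemma le_obj₂_of_distTriang {T : Triangle C} (hT : T ∈ distTriang C)
    (h₁ : w.le T.obj₁) (h₃ : w.le T.obj₃) : w.le T.obj₂ := by
  obtain ⟨A, B, f, g, h, hfil, hA, hB⟩ := w.exists_weight_filtration T.obj₂
  have hg : g = 0 := by
    obtain ⟨g', rfl⟩ := Triangle.yoneda_exact₂ T hT g (w.eq_zero_of_le_of_ge_shift _ h₁ hB)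
    rw [w.eq_zero_of_le_of_ge_shift g' h₃ hB, comp_zero]
  have : Epi f := Triangle.epi₁ _ hfil hg
  have := isSplitEpi_of_epi f
  exact w.le_retract (section_ f) f (IsSplitEpi.id f) hA

lemma ge_obj₂_of_distTriang {T : Triangle C} (hT : T ∈ distTriang C)
    (h₁ : w.ge T.obj₁) (h₃ : w.ge T.obj₃) : w.ge T.obj₂ := by
  -- Filter `T.obj₂⟦1⟧`, so that `w.orth` applies to maps from `w.le` into the triangle `T⟦1⟧`.
  obtain ⟨A, B, f, g, h, hfil, hA, hB⟩ := w.exists_weight_filtration (T.obj₂⟦(1 : ℤ)⟧)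
  have hf : f = 0 := by
    obtain ⟨k, rfl⟩ := Triangle.coyoneda_exact₂ _ (Triangle.shift_distinguished T hT 1) f
      (w.orth _ hA h₃)
    rw [w.orth k hA h₁]
    exact zero_comp
  have : Mono g := Triangle.mono₂ _ hfil hf
  have := isSplitMono_of_mono g
  have hretract : g⟦(-1 : ℤ)⟧' ≫ (retraction g)⟦(-1 : ℤ)⟧' = 𝟙 _ := by
    rw [← Functor.map_comp, IsSplitMono.id, CategoryTheory.Functor.map_id]
  exact w.ge_iso (shiftShiftNeg T.obj₂ (1 : ℤ)) (w.ge_retract _ _ hretract hB)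

end WeightStructure

namespace CategoryTheory.Pretriangulated

variable {C : Type*} [Category C] [HasZeroObject C] [Preadditive C]
  [HasShift C ℤ] [∀ n : ℤ, (shiftFunctor C n).Additive] [Pretriangulated C]

lemma nonempty_iso_shift_obj₃_of_isZero₂ {T : Triangle C} (hT : T ∈ distTriang C)
    (h : IsZero T.obj₂) : Nonempty (T.obj₁ ≅ T.obj₃⟦(-1 : ℤ)⟧) := by
  have := (Triangle.isZero₃_iff_isIso₁ _ (inv_rot_of_distTriang _ hT)).1 h
  exact ⟨(asIso T.invRotate.mor₁).symm⟩

lemma nonempty_iso_obj₁_of_arrow_iso_mor₂ {T₁ T₂ : Triangle C} (hT₁ : T₁ ∈ distTriang C)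
    (hT₂ : T₂ ∈ distTriang C) (e : Arrow.mk T₁.mor₂ ≅ Arrow.mk T₂.mor₂) :
    Nonempty (T₁.obj₁ ≅ T₂.obj₁) := by
  obtain ⟨e', -⟩ := exists_iso_of_arrow_iso _ _ (rot_of_distTriang _ hT₁)
    (rot_of_distTriang _ hT₂) e
  exact ⟨(shiftFunctor C (1 : ℤ)).preimageIso (Triangle.π₃.mapIso e')⟩

end CategoryTheory.Pretriangulated

lemma CategoryTheory.Adjunction.isZero_comp_right_of_isZero_comp_left
    {A B D : Type*} [Category A] [Category B] [Category D] [HasZeroMorphisms D]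
    {L₁ : B ⥤ A} {R₁ : A ⥤ B} {L₂ : D ⥤ B} {R₂ : B ⥤ D} (adj₁ : L₁ ⊣ R₁) (adj₂ : L₂ ⊣ R₂)
    (h : ∀ Z : D, IsZero (L₁.obj (L₂.obj Z))) (N : A) : IsZero (R₂.obj (R₁.obj N)) := by
  rw [IsZero.iff_id_eq_zero]
  exact (adj₂.homEquiv _ _).symm.injective
    ((adj₁.homEquiv _ _).symm.injective ((h _).eq_of_src _ _))

/-- **Construction 1.** Given `M_U` in the heart of `C(U)` and a weight filtration
`C_{≤0} → i^* j_* M_U → C_{≥1} → C_{≤0}[1]` with `C_{≤0} ∈ C(Z)_{w≤0}` and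
`C_{≥1} ∈ C(Z)_{w≥1}`, there is an object `M` of the heart of `C(X)` with
`j^* M ≅ M_U`, `i^* M ≅ C_{≤0}` and `i^! M ≅ C_{≥1}[-1]`. -/
theorem construction_of_extension
    (hglue : IsGluing jl js jr il im ir adj₁ adj₂ adj₃ adj₄)
    (hw : GluedWeights jl js jr il im ir wU wX wZ)
    (MU : CU) (hMU : wU.heart MU)
    (Cle Cge : CZ) (c₁ : Cle ⟶ il.obj (jr.obj MU)) (c₂ : il.obj (jr.obj MU) ⟶ Cge)
    (δ : Cge ⟶ Cle⟦(1 : ℤ)⟧)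
    (hdist : Triangle.mk c₁ c₂ δ ∈ distTriang CZ)
    (hCle : wZ.le Cle) (hCge : wZ.geW 1 Cge) :
    ∃ M : CX, wX.heart M ∧ Nonempty (js.obj M ≅ MU) ∧
      Nonempty (il.obj M ≅ Cle) ∧ Nonempty (ir.obj M ≅ Cge⟦(-1 : ℤ)⟧) := by
  have := hglue.counit_iso
  obtain ⟨M, a, d, hT⟩ := distinguished_cocone_triangle₁ (adj₃.homEquiv _ _ c₂)
  have : IsIso (js.map a) := (Triangle.isZero₃_iff_isIso₁ _
    (js.map_distinguished _ hT)).1 (hglue.js_im_zero Cge)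
  let eU : js.obj M ≅ MU := asIso (js.map a) ≪≫ asIso (adj₂.counit.app MU)
  obtain ⟨eIr⟩ := nonempty_iso_shift_obj₃_of_isZero₂ (ir.map_distinguished _ hT)
    (adj₂.isZero_comp_right_of_isZero_comp_left adj₄ hglue.js_im_zero MU)
  have hφ : il.map (adj₃.homEquiv _ _ c₂) ≫ adj₃.counit.app Cge = c₂ :=
    (adj₃.homEquiv_counit _ _ _).symm.trans ((adj₃.homEquiv _ _).symm_apply_apply c₂)
  let ε : il.obj (im.obj Cge) ≅ Cge := asIso (adj₃.counit.app Cge)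
  obtain ⟨eIl⟩ := nonempty_iso_obj₁_of_arrow_iso_mor₂ (il.map_distinguished _ hT) hdist
    (Arrow.isoMk (Iso.refl _) ε ((Category.id_comp _).trans hφ.symm))
  refine ⟨M, ⟨?_, ?_⟩, ⟨eU⟩, ⟨eIl⟩,
    ⟨eIr ≪≫ (shiftFunctor CZ (-1 : ℤ)).mapIso (asIso (adj₄.unit.app Cge)).symm⟩⟩
  · obtain ⟨δ₁, hδ₁⟩ := hglue.tri₁ M
    exact wX.le_obj₂_of_distTriang hδ₁ (hw.jl_le _ (wU.le_iso eU.symm hMU.1))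
      (hw.im_le _ (wZ.le_iso eIl.symm hCle))
  · exact wX.ge_obj₂_of_distTriang (inv_rot_of_distTriang _ hT)
      (wX.ge_iso ((im.commShiftIso (-1 : ℤ)).app Cge) (hw.im_ge _ hCge)) (hw.jr_ge MU hMU.2)
end

section
/- Let C(U), C(X), C(Z) be pretriangulated categories related by gluing and equipped with weight structures compatible with the gluing. Let M_U ∈ C(U)_{w=0,∂w≠0,1}, let M ∈ C(X)_{w=0,i^*w≤−1,i^!w≥1} be an object with j^* M ≅ M_U (i.e. M is the intermediate extension j_{!*} M_U), and let α ≤ 0 and β ≥ 1 be integers. Then i^* j_* M_U is without weights α, α+1, …, β if and only if i^* M ∈ C(Z)_{w≤α−1} and i^! M ∈ C(Z)_{w≥β}. (Theorem 0E (b).) -/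
/-!
Applying `i^*` to the localization triangle `i_* i^! M → M → j_* j^* M` and using
`i^* i_* ≅ id` gives a distinguished triangle `i^* M → i^* j_* M_U → (i^! M)[1]` whose outer
terms have weights `≤ -1` and `≥ 2`. A weight filtration that avoids at least one weight is
unique up to isomorphism: by orthogonality, maps from objects of small weight into its
middle term lift uniquely through its first morphism. Hence `i^* j_* M_U` avoids the
weights `α, …, β` exactly when this particular triangle does, i.e. when `i^* M` has
weights `≤ α - 1` and `i^! M` has weights `≥ β`.
-/

set_option linter.unusedVariables false

open CategoryTheory Limits Pretriangulated

universe w₁ w₂ w₃ w₄ v₁ v₂ v₃ v₄ u₁ u₂ u₃ u₄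

variable {CU : Type*} [Category CU] [HasZeroObject CU] [Preadditive CU]
  [HasShift CU ℤ] [∀ n : ℤ, (shiftFunctor CU n).Additive] [Pretriangulated CU]
variable {CX : Type*} [Category CX] [HasZeroObject CX] [Preadditive CX]
  [HasShift CX ℤ] [∀ n : ℤ, (shiftFunctor CX n).Additive] [Pretriangulated CX]
variable {CZ : Type*} [Category CZ] [HasZeroObject CZ] [Preadditive CZ]
  [HasShift CZ ℤ] [∀ n : ℤ, (shiftFunctor CZ n).Additive] [Pretriangulated CZ]

/- The six gluing functors: `jl = j_!`, `js = j^*`, `jr = j_*`,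
   `il = i^*`, `im = i_*`, `ir = i^!`; all of them are exact. -/
variable (jl : CU ⥤ CX) (js : CX ⥤ CU) (jr : CU ⥤ CX)
  (il : CX ⥤ CZ) (im : CZ ⥤ CX) (ir : CX ⥤ CZ)
  [jl.CommShift ℤ] [jl.IsTriangulated] [js.CommShift ℤ] [js.IsTriangulated]
  [jr.CommShift ℤ] [jr.IsTriangulated] [il.CommShift ℤ] [il.IsTriangulated]
  [im.CommShift ℤ] [im.IsTriangulated] [ir.CommShift ℤ] [ir.IsTriangulated]
  [im.Full] [im.Faithful]
variable (adj₁ : jl ⊣ js) (adj₂ : js ⊣ jr) (adj₃ : il ⊣ im) (adj₄ : im ⊣ ir)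

variable (wU : WeightStructure CU) (wX : WeightStructure CX) (wZ : WeightStructure CZ)

namespace WeightStructure

variable {C : Type*} [Category C] [HasZeroObject C] [Preadditive C]
    [HasShift C ℤ] [∀ n : ℤ, (shiftFunctor C n).Additive] [Pretriangulated C]
    (w : WeightStructure C)

lemma leW_of_iso {X Y : C} (e : X ≅ Y) {n : ℤ} (h : w.leW n X) : w.leW n Y :=
  w.le_iso ((shiftFunctor C (-n)).mapIso e) h

lemma geW_of_iso {X Y : C} (e : X ≅ Y) {n : ℤ} (h : w.geW n X) : w.geW n Y :=
  w.ge_iso ((shiftFunctor C (-n)).mapIso e) h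

lemma geW_shift_iff {n : ℤ} {X : C} (k : ℤ) : w.geW (n + k) (X⟦k⟧) ↔ w.geW n X := by
  let e : X⟦k⟧⟦-(n + k)⟧ ≅ X⟦-n⟧ := ((shiftFunctorAdd' C k (-(n + k)) (-n) (by ring)).app X).symm
  exact ⟨w.ge_iso e, w.ge_iso e.symm⟩

lemma leW_add_one {n : ℤ} {X : C} (h : w.leW n X) : w.leW (n + 1) X :=
  w.le_iso ((shiftFunctorAdd' C (-n) (-1) (-(n + 1)) (by ring)).app X).symm (w.le_shift _ h)

lemma geW_of_geW_add_one {n : ℤ} {X : C} (h : w.geW (n + 1) X) : w.geW n X :=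
  w.ge_iso ((shiftFunctorAdd' C (-(n + 1)) 1 (-n) (by ring)).app X).symm (w.ge_shift _ h)

lemma leW_mono {a b : ℤ} (hab : a ≤ b) {X : C} (h : w.leW a X) : w.leW b X := by
  induction b, hab using Int.leInduction with
  | base => exact h
  | succ b _ ih => exact w.leW_add_one ih

lemma geW_anti {a b : ℤ} (hab : a ≤ b) {X : C} (h : w.geW b X) : w.geW a X := by
  induction b, hab using Int.leInduction with
  | base => exact h
  | succ b _ ih => exact ih (w.geW_of_geW_add_one h)

lemma hom_eq_zero {a b : ℤ} (hab : a < b) {X Y : C} (hX : w.leW a X) (hY : w.geW b Y)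
    (f : X ⟶ Y) : f = 0 := by
  have hY' : w.ge (Y⟦-(a + 1)⟧) := w.geW_anti (by omega) hY
  let e : Y⟦-a⟧ ≅ Y⟦-(a + 1)⟧⟦(1 : ℤ)⟧ := (shiftFunctorAdd' C (-(a + 1)) 1 (-a) (by ring)).app Y
  have h : (shiftFunctor C (-a)).map f ≫ e.hom = 0 := w.orth _ hX hY'
  rw [← zero_comp (f := e.hom), cancel_mono] at h
  exact (Functor.map_eq_zero_iff _).1 h

lemma exists_lift_mor₁ {T : Triangle C} (hT : T ∈ distTriang C) {a b : ℤ} (hab : a < b)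
    (h₃ : w.geW b T.obj₃) {X : C} (hX : w.leW a X) (f : X ⟶ T.obj₂) :
    ∃ g : X ⟶ T.obj₁, g ≫ T.mor₁ = f := by
  obtain ⟨g, hg⟩ := Triangle.coyoneda_exact₂ T hT f (w.hom_eq_zero hab hX h₃ _)
  exact ⟨g, hg.symm⟩

lemma hom_ext_mor₁ {T : Triangle C} (hT : T ∈ distTriang C) {a b : ℤ} (hab : a + 1 < b)
    (h₃ : w.geW b T.obj₃) {X : C} (hX : w.leW a X) {u v : X ⟶ T.obj₁}
    (huv : u ≫ T.mor₁ = v ≫ T.mor₁) : u = v := by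
  rw [← sub_eq_zero]
  obtain ⟨g, hg⟩ := Triangle.coyoneda_exact₂ _ (inv_rot_of_distTriang T hT) (u - v)
    (show (u - v) ≫ T.mor₁ = 0 by rw [Preadditive.sub_comp, huv, sub_self])
  have h₃' : w.geW (b - 1) (T.obj₃⟦(-1 : ℤ)⟧) := (w.geW_shift_iff (-1)).2 h₃
  rw [hg, w.hom_eq_zero (by omega) hX h₃' g]
  exact zero_comp

/-- Weight filtrations of an object avoiding at least one weight are unique up to isomorphism. -/
lemma nonempty_triangle_iso_of_weight_gap {T T' : Triangle C} (hT : T ∈ distTriang C)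
    (hT' : T' ∈ distTriang C) (e : T.obj₂ ≅ T'.obj₂) {a b : ℤ} (hab : a + 1 < b)
    (h₁ : w.leW a T.obj₁) (h₃ : w.geW b T.obj₃) (h₁' : w.leW a T'.obj₁)
    (h₃' : w.geW b T'.obj₃) : Nonempty (T ≅ T') := by
  obtain ⟨u, hu⟩ := w.exists_lift_mor₁ hT' (by omega) h₃' h₁ (T.mor₁ ≫ e.hom)
  obtain ⟨v, hv⟩ := w.exists_lift_mor₁ hT (by omega) h₃ h₁' (T'.mor₁ ≫ e.inv)
  let e₁ : T.obj₁ ≅ T'.obj₁ :=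
    { hom := u
      inv := v
      hom_inv_id := w.hom_ext_mor₁ hT hab h₃ h₁ (by
        rw [Category.assoc, hv, ← Category.assoc, hu, Category.assoc, e.hom_inv_id,
          Category.comp_id, Category.id_comp])
      inv_hom_id := w.hom_ext_mor₁ hT' hab h₃' h₁' (by
        rw [Category.assoc, hu, ← Category.assoc, hv, Category.assoc, e.inv_hom_id,
          Category.comp_id, Category.id_comp]) }
  exact ⟨isoTriangleOfIso₁₂ T T' hT hT' e₁ e hu.symm⟩

lemma withoutWeights_of_distTriang {T : Triangle C} (hT : T ∈ distTriang C) {M : C}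
    (e : T.obj₂ ≅ M) {m n : ℤ} (h₁ : w.leW (m - 1) T.obj₁) (h₃ : w.geW (n + 1) T.obj₃) :
    w.WithoutWeights m n M := by
  refine ⟨_, _, T.mor₁ ≫ e.hom, e.inv ≫ T.mor₂, T.mor₃, ?_, h₁, h₃⟩
  refine isomorphic_distinguished T hT _ (Triangle.isoMk _ _ (Iso.refl _) e.symm (Iso.refl _)
    ?_ ?_ ?_)
  · show (T.mor₁ ≫ e.hom) ≫ e.inv = 𝟙 T.obj₁ ≫ T.mor₁
    rw [Category.assoc, e.hom_inv_id, Category.comp_id, Category.id_comp]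
  · show (e.inv ≫ T.mor₂) ≫ 𝟙 T.obj₃ = e.inv ≫ T.mor₂
    rw [Category.comp_id]
  · show T.mor₃ ≫ (𝟙 T.obj₁)⟦(1 : ℤ)⟧' = 𝟙 T.obj₃ ≫ T.mor₃
    rw [CategoryTheory.Functor.map_id, Category.comp_id, Category.id_comp]

end WeightStructure

theorem weights_avoided_iff_bounds_on_intermediate_extension
    (hglue : IsGluing jl js jr il im ir adj₁ adj₂ adj₃ adj₄)
    (MU : CU)
    (M : CX) (hM : wX.heart M ∧ wZ.leW (-1) (il.obj M) ∧ wZ.geW 1 (ir.obj M))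
    (hiso : Nonempty (js.obj M ≅ MU))
    (α β : ℤ) (hα : α ≤ 0) (hβ : 1 ≤ β) :
    wZ.WithoutWeights α β (il.obj (jr.obj MU)) ↔
      (wZ.leW (α - 1) (il.obj M) ∧ wZ.geW β (ir.obj M)) := by
  obtain ⟨-, hle, hge⟩ := hM
  obtain ⟨δ, hδ⟩ := hglue.tri₂ M
  -- `i^* M → i^* j_* j^* M → (i^* i_* i^! M)[1] → (i^* M)[1]`
  let T := (il.mapTriangle.obj (Triangle.mk (adj₄.counit.app M) (adj₂.unit.app M) δ)).rotate
  have hT : T ∈ distTriang CZ := rot_of_distTriang _ (il.map_distinguished _ hδ)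
  let e₂ : T.obj₂ ≅ il.obj (jr.obj MU) := il.mapIso (jr.mapIso hiso.some)
  let e₃ : T.obj₃ ≅ (ir.obj M)⟦(1 : ℤ)⟧ :=
    (shiftFunctor CZ (1 : ℤ)).mapIso ((asIso adj₃.counit).app (ir.obj M))
  have hT₃ : wZ.geW (1 + 1) T.obj₃ := wZ.geW_of_iso e₃.symm ((wZ.geW_shift_iff 1).2 hge)
  constructor
  · rintro ⟨A, B, f, g, h, hS, hA, hB⟩
    obtain ⟨φ⟩ := wZ.nonempty_triangle_iso_of_weight_gap hS hT e₂.symm (by omega : (-1 : ℤ) + 1 < 1 + 1)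
      (wZ.leW_mono (by omega) hA) (wZ.geW_anti (by omega) hB) hle hT₃
    exact ⟨wZ.leW_of_iso (Triangle.π₁.mapIso φ) hA,
      (wZ.geW_shift_iff 1).1 (wZ.geW_of_iso (Triangle.π₃.mapIso φ ≪≫ e₃) hB)⟩
  · rintro ⟨h₁, h₂⟩
    exact wZ.withoutWeights_of_distTriang hT e₂ h₁
      (wZ.geW_of_iso e₃.symm ((wZ.geW_shift_iff 1).2 h₂))
end
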